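/- arXiv:1310.7219 — 5 statements merged into one kernel-verified Lean document; each statement's English description precedes it below -/
import Mathlib

section
/- Let S be a nonempty connected topological space, let φ : S → ℝ be continuous with m = inf_{x∈S} φ(x) and M = sup_{x∈S} φ(x) satisfying 0 < m < M < ∞, and let β ∈ [0,2π). Then the closure in ℝ of the set { (β + 2πk)/φ(x) : x ∈ S, k ∈ ℤ } equals (⋃_{k ≤ -1} [(β+2πk)/m, (β+2πk)/M]) ∪ (⋃_{k ≥ 0} [(β+2πk)/M, (β+2πk)/m]). -/
/-!
With `c k = β + 2πk`, the set is `⋃ k, (c k / ·) '' range φ`. Since `|c k| → ∞`, this family is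
locally finite, so closure commutes with the union. The range of `φ` is a preconnected set with
closure `[m, M]`, and `t ↦ c k / t` maps `[m, M]` onto the interval between `c k / m` and
`c k / M`, oriented by the sign of `c k`; as `0 ≤ β < 2π`, `c k < 0` exactly when `k ≤ -1`.
-/

open Filter Topology Set

theorem IsPreconnected.closure_eq_Icc {s : Set ℝ} (hs : IsPreconnected s) (hne : s.Nonempty)
    {m M : ℝ} (hm : IsGLB s m) (hM : IsLUB s M) : closure s = Icc m M :=
  (closure_minimal (fun _ hx => (⟨hm.1 hx, hM.1 hx⟩ : _ ∈ Icc m M)) isClosed_Icc).antisymm <|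
    hs.closure.Icc_subset (hm.mem_closure hne) (hM.mem_closure hne)

theorem IsCompact.closure_image_eq_image_closure {X Y : Type*} [TopologicalSpace X]
    [TopologicalSpace Y] [T2Space Y] {f : X → Y} {s : Set X} (hs : IsCompact (closure s))
    (hf : ContinuousOn f (closure s)) : closure (f '' s) = f '' closure s :=
  (closure_minimal (image_mono subset_closure) (hs.image_of_continuousOn hf).isClosed).antisymm
    hf.image_closure

theorem continuousOn_const_div_Icc (a : ℝ) {m M : ℝ} (hm : 0 < m) :
    ContinuousOn (fun t => a / t) (Icc m M) :=
  continuousOn_const.div continuousOn_id fun _ ht => (hm.trans_le ht.1).ne'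

theorem image_const_div_Icc (a : ℝ) {m M : ℝ} (hm : 0 < m) (hmM : m ≤ M) :
    (fun t => a / t) '' Icc m M = uIcc (a / m) (a / M) := by
  have hcont := continuousOn_const_div_Icc a hm (M := M)
  rw [← uIcc_of_le hmM] at hcont ⊢
  have hinv : AntitoneOn (fun t : ℝ => t⁻¹) (uIcc m M) := fun s hs t _ hst =>
    inv_anti₀ (hm.trans_le (uIcc_of_le hmM ▸ hs).1) hst
  rcases le_total 0 a with ha | ha
  · exact hcont.image_uIcc_of_antitoneOn fun s hs t ht hst => by
      simpa only [div_eq_mul_inv] using mul_le_mul_of_nonneg_left (hinv hs ht hst) ha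
  · exact hcont.image_uIcc_of_monotoneOn fun s hs t ht hst => by
      simpa only [div_eq_mul_inv] using mul_le_mul_of_nonpos_left (hinv hs ht hst) ha

theorem locallyFinite_image_const_div_Icc {ι : Type*} {c : ι → ℝ}
    (hc : Tendsto c cofinite (cocompact ℝ)) {m M : ℝ} (hm : 0 < m) :
    LocallyFinite fun i => (fun t => c i / t) '' Icc m M := by
  intro y
  refine ⟨Metric.ball y 1, Metric.ball_mem_nhds y one_pos, ?_⟩
  have hfin : (c ⁻¹' Metric.closedBall 0 ((|y| + 1) * M)).Finite := by
    simpa [← preimage_compl] using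
      mem_cofinite.1 (hc (isCompact_closedBall 0 ((|y| + 1) * M)).compl_mem_cocompact)
  refine hfin.subset ?_
  rintro i ⟨_, ⟨t, ht, rfl⟩, hz⟩
  have ht0 : 0 < t := hm.trans_le ht.1
  have hz' : |c i / t| ≤ |y| + 1 := by
    have := abs_sub_abs_le_abs_sub (c i / t) y
    rw [Metric.mem_ball, Real.dist_eq] at hz
    linarith
  rw [abs_div, abs_of_pos ht0, div_le_iff₀ ht0] at hz'
  rw [mem_preimage, mem_closedBall_zero_iff, Real.norm_eq_abs]
  exact hz'.trans (mul_le_mul_of_nonneg_left ht.2 (by positivity))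

theorem closure_iUnion_image_const_div {ι : Type*} {c : ι → ℝ}
    (hc : Tendsto c cofinite (cocompact ℝ)) {s : Set ℝ} {m M : ℝ} (hm : 0 < m)
    (hs : closure s = Icc m M) :
    closure (⋃ i, (fun t => c i / t) '' s) = ⋃ i, (fun t => c i / t) '' Icc m M := by
  have hsub : s ⊆ Icc m M := hs ▸ subset_closure
  rw [((locallyFinite_image_const_div_Icc hc hm).subset fun i => image_mono hsub).closure_iUnion]
  refine iUnion_congr fun i => ?_
  rw [(hs ▸ isCompact_Icc : IsCompact (closure s)).closure_image_eq_image_closure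
    (hs ▸ continuousOn_const_div_Icc (c i) hm), hs]

theorem tendsto_add_two_pi_mul_int_cofinite_cocompact (β : ℝ) :
    Tendsto (fun k : ℤ => β + 2 * Real.pi * k) cofinite (cocompact ℝ) :=
  let h := (Homeomorph.mulLeft₀ (2 * Real.pi) Real.two_pi_pos.ne').trans (Homeomorph.addLeft β)
  Tendsto.comp (g := h) h.map_cocompact.le Int.tendsto_coe_cofinite

theorem uIcc_div_of_nonpos {a m M : ℝ} (ha : a ≤ 0) (hm : 0 < m) (hmM : m ≤ M) :
    uIcc (a / m) (a / M) = Icc (a / m) (a / M) :=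
  uIcc_of_le <| by
    simpa only [neg_div, neg_le_neg_iff] using div_le_div_of_nonneg_left (neg_nonneg.2 ha) hm hmM

theorem uIcc_div_of_nonneg {a m M : ℝ} (ha : 0 ≤ a) (hm : 0 < m) (hmM : m ≤ M) :
    uIcc (a / m) (a / M) = Icc (a / M) (a / m) :=
  uIcc_of_ge (div_le_div_of_nonneg_left ha hm hmM)

theorem iUnion_int_eq_union {α : Type*} (f : ℤ → Set α) :
    ⋃ k, f k = (⋃ k ∈ {k : ℤ | k ≤ -1}, f k) ∪ ⋃ k ∈ {k : ℤ | 0 ≤ k}, f k := by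
  ext y
  simp only [mem_union, mem_iUnion, exists_prop, mem_ofPred_eq]
  constructor
  · rintro ⟨k, hy⟩
    rcases le_or_gt k (-1) with hk | hk
    exacts [Or.inl ⟨k, hk, hy⟩, Or.inr ⟨k, by omega, hy⟩]
  · rintro (⟨k, -, hy⟩ | ⟨k, -, hy⟩) <;> exact ⟨k, hy⟩

theorem stmt_6_general {S : Type*} [TopologicalSpace S] [ConnectedSpace S]
    (φ : S → ℝ) (hφ : Continuous φ) (m M : ℝ)
    (hm : IsGLB (Set.range φ) m) (hM : IsLUB (Set.range φ) M)
    (hm_pos : 0 < m)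
    (β : ℝ) (hβ : β ∈ Set.Ico (0:ℝ) (2 * Real.pi)) :
    closure {y : ℝ | ∃ (x : S) (k : ℤ), y = (β + 2 * Real.pi * k) / φ x} =
      (⋃ k ∈ {k : ℤ | k ≤ -1},
        Set.Icc ((β + 2 * Real.pi * k) / m) ((β + 2 * Real.pi * k) / M)) ∪
      (⋃ k ∈ {k : ℤ | 0 ≤ k},
        Set.Icc ((β + 2 * Real.pi * k) / M) ((β + 2 * Real.pi * k) / m)) := by
  have hmM : m ≤ M := isGLB_le_isLUB hm hM (range_nonempty φ)
  have hset : {y : ℝ | ∃ (x : S) (k : ℤ), y = (β + 2 * Real.pi * k) / φ x} =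
      ⋃ k : ℤ, (fun t => (β + 2 * Real.pi * k) / t) '' range φ := by
    ext y
    simp only [mem_ofPred_eq, mem_iUnion, mem_image, mem_range]
    exact ⟨fun ⟨x, k, hy⟩ => ⟨k, φ x, ⟨x, rfl⟩, hy.symm⟩,
      fun ⟨k, _, ⟨x, rfl⟩, hy⟩ => ⟨x, k, hy.symm⟩⟩
  rw [hset, closure_iUnion_image_const_div (tendsto_add_two_pi_mul_int_cofinite_cocompact β)
    hm_pos ((isPreconnected_range hφ).closure_eq_Icc (range_nonempty φ) hm hM)]
  simp_rw [image_const_div_Icc _ hm_pos hmM]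
  obtain ⟨hβ0, hβ2π⟩ := hβ
  rw [iUnion_int_eq_union]
  congr 1 <;> refine iUnion₂_congr fun k hk => ?_
  · have hk' : (k : ℝ) ≤ -1 := by exact_mod_cast hk
    exact uIcc_div_of_nonpos (by nlinarith [Real.pi_pos]) hm_pos hmM
  · have hk' : (0 : ℝ) ≤ k := by exact_mod_cast hk
    exact uIcc_div_of_nonneg (by positivity) hm_pos hmM

/-- Let `S` be a nonempty connected topological space, `φ : S → ℝ` continuous
with infimum `m` and supremum `M` over `S` satisfying `0 < m < M < ∞`, and let `β ∈ [0, 2π)`.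
Then the closure of `{(β + 2πk)/φ(x) : x ∈ S, k ∈ ℤ}` is
`(⋃_{k ≤ -1} [(β+2πk)/m, (β+2πk)/M]) ∪ (⋃_{k ≥ 0} [(β+2πk)/M, (β+2πk)/m])`. -/
theorem stmt_6 {S : Type*} [TopologicalSpace S] [ConnectedSpace S]
    (φ : S → ℝ) (hφ : Continuous φ) (m M : ℝ)
    (hm : IsGLB (Set.range φ) m) (hM : IsLUB (Set.range φ) M)
    (hm_pos : 0 < m) (hmM : m < M)
    (β : ℝ) (hβ : β ∈ Set.Ico (0:ℝ) (2 * Real.pi)) :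
    closure {y : ℝ | ∃ (x : S) (k : ℤ), y = (β + 2 * Real.pi * k) / φ x} =
      (⋃ k ∈ {k : ℤ | k ≤ -1},
        Set.Icc ((β + 2 * Real.pi * k) / m) ((β + 2 * Real.pi * k) / M)) ∪
      (⋃ k ∈ {k : ℤ | 0 ≤ k},
        Set.Icc ((β + 2 * Real.pi * k) / M) ((β + 2 * Real.pi * k) / m)) :=
  stmt_6_general φ hφ m M hm hM hm_pos β hβ
end

section
/- Let S be a nonempty connected topological space, let φ : S → (0,∞) be continuous with inf_{x∈S} φ(x) = 0 and sup_{x∈S} φ(x) = M < ∞, and let β ∈ [0,2π). Then the closure in ℝ of the set { (β + 2πk)/φ(x) : x ∈ S, k ∈ ℤ } equals (-∞, -2π/M] ∪ {0} ∪ [2π/M, +∞) if β = 0, and equals (-∞, (β-2π)/M] ∪ [β/M, +∞) if β ≠ 0. -/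
open Filter Topology

/-- Let `S` be a nonempty connected topological space, `φ : S → (0,∞)`
continuous with infimum `0` and supremum `M < ∞` over `S`, and let `β ∈ [0, 2π)`.  Then the
closure of `{(β + 2πk)/φ(x) : x ∈ S, k ∈ ℤ}` is `(-∞, -2π/M] ∪ {0} ∪ [2π/M, ∞)` if `β = 0`,
and `(-∞, (β-2π)/M] ∪ [β/M, ∞)` if `β ≠ 0`. -/
theorem stmt_7 {S : Type*} [TopologicalSpace S] [ConnectedSpace S]
    (φ : S → ℝ) (hφ : Continuous φ) (hφ_pos : ∀ x, 0 < φ x) (M : ℝ)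
    (hm : IsGLB (Set.range φ) 0) (hM : IsLUB (Set.range φ) M)
    (β : ℝ) (hβ : β ∈ Set.Ico (0:ℝ) (2 * Real.pi)) :
    (β = 0 →
      closure {y : ℝ | ∃ (x : S) (k : ℤ), y = (β + 2 * Real.pi * k) / φ x} =
        Set.Iic (-(2 * Real.pi) / M) ∪ {0} ∪ Set.Ici (2 * Real.pi / M)) ∧
    (β ≠ 0 →
      closure {y : ℝ | ∃ (x : S) (k : ℤ), y = (β + 2 * Real.pi * k) / φ x} =
        Set.Iic ((β - 2 * Real.pi) / M) ∪ Set.Ici (β / M)) := by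
  have hπ : (0:ℝ) < Real.pi := Real.pi_pos
  obtain ⟨x₀⟩ : Nonempty S := inferInstance
  have hle : ∀ x, φ x ≤ M := fun x => hM.1 ⟨x, rfl⟩
  have hM0 : 0 < M := lt_of_lt_of_le (hφ_pos x₀) (hle x₀)
  have hrange : Set.Ioo (0:ℝ) M ⊆ Set.range φ := by
    rintro t ⟨ht0, htM⟩
    obtain ⟨a, ha, ha2⟩ := hm.exists_between ht0
    obtain ⟨b, hb, hb2⟩ := hM.exists_between htM
    exact ((isPreconnected_range hφ).ordConnected).out ha hb ⟨ha2.2.le, hb2.1.le⟩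
  set Y := {y : ℝ | ∃ (x : S) (k : ℤ), y = (β + 2 * Real.pi * k) / φ x} with hY
  have hpos : ∀ (k : ℤ) (c : ℝ), c = β + 2 * Real.pi * k → 0 < c → Set.Ioi (c / M) ⊆ Y := by
    intro k c hc hc0 y hy
    simp only [Set.mem_Ioi] at hy
    have hy0 : 0 < y := lt_trans (div_pos hc0 hM0) hy
    have h1 : c < y * M := (div_lt_iff₀ hM0).mp hy
    have ht : c / y ∈ Set.Ioo (0:ℝ) M :=
      ⟨div_pos hc0 hy0, (div_lt_iff₀ hy0).mpr (by nlinarith)⟩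
    obtain ⟨x, hx⟩ := hrange ht
    refine ⟨x, k, ?_⟩
    rw [hx, ← hc]
    field_simp
  have hneg : ∀ (k : ℤ) (c : ℝ), c = β + 2 * Real.pi * k → c < 0 → Set.Iio (c / M) ⊆ Y := by
    intro k c hc hc0 y hy
    simp only [Set.mem_Iio] at hy
    have hy0 : y < 0 := lt_trans hy (div_neg_of_neg_of_pos hc0 hM0)
    have h1 : y * M < c := (lt_div_iff₀ hM0).mp hy
    have ht : c / y ∈ Set.Ioo (0:ℝ) M :=
      ⟨div_pos_of_neg_of_neg hc0 hy0, (div_lt_iff_of_neg hy0).mpr (by nlinarith)⟩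
    obtain ⟨x, hx⟩ := hrange ht
    refine ⟨x, k, ?_⟩
    rw [hx, ← hc, div_div_eq_mul_div, mul_comm c y, mul_div_assoc, div_self hc0.ne, mul_one]
  constructor
  · -- β = 0
    intro hβ0
    subst hβ0
    apply subset_antisymm
    · apply closure_minimal
      · rintro y ⟨x, k, rfl⟩
        rcases lt_trichotomy (k : ℝ) 0 with hk | hk | hk
        · have hk' : k < 0 := by exact_mod_cast hk
          have hk1 : (k : ℝ) ≤ -1 := by exact_mod_cast (by omega : k ≤ -1)
          left; left
          simp only [Set.mem_Iic]
          rw [div_le_div_iff₀ (hφ_pos x) hM0]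
          nlinarith [hφ_pos x, hle x,
            mul_le_mul_of_nonneg_right (show 2 * Real.pi * (k:ℝ) ≤ -(2 * Real.pi) by nlinarith) hM0.le,
            mul_le_mul_of_nonpos_left (hle x) (show -(2 * Real.pi) ≤ 0 by linarith)]
        · left; right
          simp [hk]
        · have hk' : 0 < k := by exact_mod_cast hk
          have hk1 : (1 : ℝ) ≤ (k : ℝ) := by exact_mod_cast (by omega : 1 ≤ k)
          right
          simp only [Set.mem_Ici]
          rw [div_le_div_iff₀ hM0 (hφ_pos x)]
          nlinarith [hφ_pos x, hle x,
            mul_le_mul_of_nonneg_left (hle x) (show (0:ℝ) ≤ 2 * Real.pi by positivity),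
            mul_le_mul_of_nonneg_right (show 2 * Real.pi ≤ 2 * Real.pi * (k:ℝ) by nlinarith) hM0.le]
      · exact (isClosed_Iic.union isClosed_singleton).union isClosed_Ici
    · rintro y ((hy | hy) | hy)
      · have hsub : Set.Iio (-(2 * Real.pi) / M) ⊆ Y :=
          hneg (-1) (-(2 * Real.pi)) (by push_cast; ring) (by nlinarith)
        have : Set.Iic (-(2 * Real.pi) / M) ⊆ closure Y := by
          rw [← closure_Iio]; exact closure_mono hsub
        exact this hy
      · rcases hy with rfl
        exact subset_closure ⟨x₀, 0, by simp⟩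
      · have hsub : Set.Ioi (2 * Real.pi / M) ⊆ Y :=
          hpos 1 (2 * Real.pi) (by push_cast; ring) (by nlinarith)
        have : Set.Ici (2 * Real.pi / M) ⊆ closure Y := by
          rw [← closure_Ioi]; exact closure_mono hsub
        exact this hy
  · -- β ≠ 0
    intro hβ0
    have hβpos : 0 < β := lt_of_le_of_ne hβ.1 (Ne.symm hβ0)
    have hβlt : β < 2 * Real.pi := hβ.2
    apply subset_antisymm
    · apply closure_minimal
      · rintro y ⟨x, k, rfl⟩
        rcases le_or_gt 0 (k : ℝ) with hk | hk
        · right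
          simp only [Set.mem_Ici]
          rw [div_le_div_iff₀ hM0 (hφ_pos x)]
          nlinarith [hφ_pos x, hle x,
            mul_le_mul_of_nonneg_left (hle x) hβpos.le,
            mul_nonneg (mul_nonneg (mul_nonneg (by norm_num : (0:ℝ) ≤ 2) hπ.le) hk) hM0.le]
        · have hk' : k < 0 := by exact_mod_cast hk
          have hk1 : (k : ℝ) ≤ -1 := by exact_mod_cast (by omega : k ≤ -1)
          left
          simp only [Set.mem_Iic]
          rw [div_le_div_iff₀ (hφ_pos x) hM0]
          nlinarith [hφ_pos x, hle x,
            mul_le_mul_of_nonneg_right (show β + 2 * Real.pi * (k:ℝ) ≤ β - 2 * Real.pi by nlinarith) hM0.le,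
            mul_le_mul_of_nonpos_left (hle x) (show β - 2 * Real.pi ≤ 0 by linarith)]
      · exact isClosed_Iic.union isClosed_Ici
    · rintro y (hy | hy)
      · have hsub : Set.Iio ((β - 2 * Real.pi) / M) ⊆ Y :=
          hneg (-1) (β - 2 * Real.pi) (by push_cast; ring) (by nlinarith)
        have : Set.Iic ((β - 2 * Real.pi) / M) ⊆ closure Y := by
          rw [← closure_Iio]; exact closure_mono hsub
        exact this hy
      · have hsub : Set.Ioi (β / M) ⊆ Y :=
          hpos 0 β (by push_cast; ring) hβpos
        have : Set.Ici (β / M) ⊆ closure Y := by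
          rw [← closure_Ioi]; exact closure_mono hsub
        exact this hy
end

section
/- Let S be a nonempty connected topological space, let φ : S → (0,∞) be continuous with sup_{x∈S} φ(x) = +∞, and let β ∈ [0,2π). Then the set { (β + 2πk)/φ(x) : x ∈ S, k ∈ ℤ } is dense in ℝ, i.e. its closure is all of ℝ. -/
open Filter Topology

/-- Let `S` be a nonempty connected topological space and `φ : S → (0,∞)`
continuous with `sup_{x ∈ S} φ(x) = +∞`, and let `β ∈ [0, 2π)`.  Then the set
`{(β + 2πk)/φ(x) : x ∈ S, k ∈ ℤ}` is dense in `ℝ`. -/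
theorem stmt_8 {S : Type*} [TopologicalSpace S] [ConnectedSpace S]
    (φ : S → ℝ) (hφ : Continuous φ) (hφ_pos : ∀ x, 0 < φ x)
    (hφ_unbdd : ¬ BddAbove (Set.range φ))
    (β : ℝ) (hβ : β ∈ Set.Ico (0:ℝ) (2 * Real.pi)) :
    closure {y : ℝ | ∃ (x : S) (k : ℤ), y = (β + 2 * Real.pi * k) / φ x} = Set.univ := by
  rw [← dense_iff_closure_eq, Metric.dense_iff]
  intro y r hr
  have h2π : (0:ℝ) < 2 * Real.pi := by positivity
  obtain ⟨x, hx⟩ : ∃ x, 2 * Real.pi / r < φ x := by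
    by_contra h
    push_neg at h
    exact hφ_unbdd ⟨2 * Real.pi / r, by rintro _ ⟨x, rfl⟩; exact h x⟩
  have ht0 : 0 < φ x := hφ_pos x
  set t := φ x with ht
  set k : ℤ := ⌊(y * t - β) / (2 * Real.pi)⌋ with hk
  refine ⟨(β + 2 * Real.pi * k) / t, ?_, ⟨x, k, rfl⟩⟩
  rw [Metric.mem_ball, Real.dist_eq]
  have h1 : (k:ℝ) ≤ (y * t - β) / (2 * Real.pi) := Int.floor_le _
  have h2 : (y * t - β) / (2 * Real.pi) < k + 1 := Int.lt_floor_add_one _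
  have hA : 2 * Real.pi * k ≤ y * t - β := by
    rw [mul_comm]; exact (le_div_iff₀ h2π).mp h1
  have hB : y * t - β < 2 * Real.pi * (k + 1) := by
    have := (div_lt_iff₀ h2π).mp h2; linarith
  have heq : (β + 2 * Real.pi * k) / t - y = (β + 2 * Real.pi * k - y * t) / t := by
    field_simp
  rw [heq, abs_div, abs_of_pos ht0]
  have habs : |β + 2 * Real.pi * k - y * t| < 2 * Real.pi := by
    rw [abs_lt]; constructor <;> nlinarith
  have h3 : 2 * Real.pi / t < r := by
    rw [div_lt_iff₀ ht0]
    have := (div_lt_iff₀ hr).mp hx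
    linarith
  calc |β + 2 * Real.pi * k - y * t| / t < 2 * Real.pi / t := by gcongr
    _ < r := h3
end

section
/- Let d ≥ 2, ℓ > 0, L ≥ 0, and let ψ : ℝ^{d-1} → ℝ satisfy ψ(x′) ≥ ℓ for all x′ and |ψ(x′) - ψ(y′)| ≤ L|x′ - y′| for all x′, y′. Let σ > 1/2. For f ∈ L^{2,σ}(ℝ^d) and T > 0 define the time average (A_T f)(x₁,x′) = (1/(2T)) ∫_{-T}^{T} f(x₁ + tψ(x′), x′) dt. Then there is a constant C depending only on σ, ℓ and L such that for every f ∈ L^{2,σ}(ℝ^d) and every T ≥ 1, ‖A_T f‖_{L^{2,-σ}(ℝ^d)} ≤ C T^{-1/3} ‖f‖_{L^{2,σ}(ℝ^d)}. In particular A_T converges to 0 — the orthogonal projection onto the flow-invariant functions in L²(ℝ^d) — in the operator norm of bounded operators from L^{2,σ}(ℝ^d) to L^{2,-σ}(ℝ^d) as T → ∞. -/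
open MeasureTheory Complex Filter Topology
open scoped ENNReal

/-!
For fixed `x'` the substitution `s = x₁ + t ψ(x')` and `ψ ≥ ℓ` give
`|∫_{-T}^{T} f(x₁ + tψ(x'), x') dt| ≤ ℓ⁻¹ ∫_ℝ |f(s, x')| ds`, uniformly in the interval of
integration. Cauchy–Schwarz against the weights `(1 + s²)^{∓σ}`, the first of which has finite
integral `K` because `σ > 1/2`, bounds this by `ℓ⁻¹ K^{1/2}` times the `L^{2,σ}` norm of `f` on the
line `x' = const`. Integrating in `x`, `‖A_T f‖_{L^{2,-σ}} ≤ K/(2ℓT) ‖f‖_{L^{2,σ}}`, and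
`T⁻¹ ≤ T^{-1/3}` for `T ≥ 1`.
-/

lemma lintegral_comp_add_mul (φ : ℝ → ℝ≥0∞) (a : ℝ) {c : ℝ} (hc : 0 < c) :
    ∫⁻ t, φ (a + t * c) = ENNReal.ofReal c⁻¹ * ∫⁻ s, φ s := by
  have scale := (Homeomorph.mulRight₀ c hc.ne').measurableEmbedding.lintegral_map
    (fun u => φ (a + u)) (μ := volume)
  rw [Homeomorph.coe_mulRight₀, Real.map_volume_mul_right hc.ne', lintegral_smul_measure,
    abs_of_pos (inv_pos.2 hc), lintegral_add_left_eq_self] at scale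
  exact scale.symm

lemma enorm_intervalIntegral_le_lintegral_enorm {E : Type*} [NormedAddCommGroup E]
    [NormedSpace ℝ E] (g : ℝ → E) (a b : ℝ) :
    ‖∫ t in a..b, g t‖ₑ ≤ ∫⁻ t, ‖g t‖ₑ := by
  rw [← ofReal_norm, intervalIntegral.norm_integral_eq_norm_integral_uIoc, ofReal_norm]
  exact (enorm_integral_le_lintegral_enorm _).trans (setLIntegral_le_lintegral _ _)

lemma sq_lintegral_le_lintegral_inv_mul_lintegral {α : Type*} [MeasurableSpace α]
    (μ : Measure α) {w : α → ℝ} (hw : Measurable w) (hw0 : ∀ x, 0 < w x)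
    {g : α → ℝ≥0∞} (hg : AEMeasurable g μ) :
    (∫⁻ x, g x ∂μ) ^ 2
      ≤ (∫⁻ x, ENNReal.ofReal (w x)⁻¹ ∂μ) * ∫⁻ x, ENNReal.ofReal (w x) * g x ^ 2 ∂μ := by
  set h₁ : α → ℝ≥0∞ := fun x => ENNReal.ofReal (Real.sqrt (w x))⁻¹
  set h₂ : α → ℝ≥0∞ := fun x => ENNReal.ofReal (Real.sqrt (w x)) * g x
  have sqrt_pos : ∀ x, 0 < Real.sqrt (w x) := fun x => Real.sqrt_pos.2 (hw0 x)
  have g_eq : ∀ x, g x = h₁ x * h₂ x := fun x => by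
    rw [← mul_assoc, ← ENNReal.ofReal_mul (inv_nonneg.2 (sqrt_pos x).le),
      inv_mul_cancel₀ (sqrt_pos x).ne', ENNReal.ofReal_one, one_mul]
  have h₁_sq : ∀ x, h₁ x ^ (2 : ℝ) = ENNReal.ofReal (w x)⁻¹ := fun x => by
    rw [ENNReal.rpow_two, ← ENNReal.ofReal_pow (inv_nonneg.2 (sqrt_pos x).le), inv_pow,
      Real.sq_sqrt (hw0 x).le]
  have h₂_sq : ∀ x, h₂ x ^ (2 : ℝ) = ENNReal.ofReal (w x) * g x ^ 2 := fun x => by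
    rw [ENNReal.rpow_two, mul_pow, ← ENNReal.ofReal_pow (sqrt_pos x).le,
      Real.sq_sqrt (hw0 x).le]
  have holder := ENNReal.lintegral_mul_le_Lp_mul_Lq μ Real.HolderConjugate.two_two
    (by fun_prop : AEMeasurable h₁ μ) (by fun_prop : AEMeasurable h₂ μ)
  simp only [h₁_sq, h₂_sq] at holder
  calc (∫⁻ x, g x ∂μ) ^ 2 = (∫⁻ x, (h₁ * h₂) x ∂μ) ^ 2 := by rw [lintegral_congr g_eq]; rfl
    _ ≤ ((∫⁻ x, ENNReal.ofReal (w x)⁻¹ ∂μ) ^ (1 / 2 : ℝ)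
          * (∫⁻ x, ENNReal.ofReal (w x) * g x ^ 2 ∂μ) ^ (1 / 2 : ℝ)) ^ 2 := by gcongr
    _ = _ := by
      rw [mul_pow, ← ENNReal.rpow_two, ← ENNReal.rpow_two, ← ENNReal.rpow_mul,
        ← ENNReal.rpow_mul]
      norm_num

lemma sq_enorm_intervalIntegral_comp_add_mul_le {E : Type*} [NormedAddCommGroup E]
    [NormedSpace ℝ E] [MeasurableSpace E] [BorelSpace E] {w : ℝ → ℝ} (hw : Measurable w)
    (hw0 : ∀ s, 0 < w s)
    {g : ℝ → E} (hg : Measurable g) (a b x : ℝ) {c : ℝ} (hc : 0 < c) :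
    ‖∫ t in a..b, g (x + t * c)‖ₑ ^ 2
      ≤ ENNReal.ofReal c⁻¹ ^ 2
        * ((∫⁻ s, ENNReal.ofReal (w s)⁻¹) * ∫⁻ s, ENNReal.ofReal (w s) * ‖g s‖ₑ ^ 2) := by
  calc ‖∫ t in a..b, g (x + t * c)‖ₑ ^ 2
      ≤ (ENNReal.ofReal c⁻¹ * ∫⁻ s, ‖g s‖ₑ) ^ 2 := by
        rw [← lintegral_comp_add_mul (fun s => ‖g s‖ₑ) x hc]
        gcongr
        exact enorm_intervalIntegral_le_lintegral_enorm _ a b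
    _ ≤ _ := by
        rw [mul_pow]
        gcongr
        exact sq_lintegral_le_lintegral_inv_mul_lintegral volume hw hw0 hg.enorm.aemeasurable

lemma integrable_one_add_sq_rpow_neg {σ : ℝ} (hσ : 1 / 2 < σ) :
    Integrable fun s : ℝ => (1 + s ^ 2) ^ (-σ) := by
  have h := integrable_rpow_neg_one_add_norm_sq (E := ℝ) (μ := volume) (r := 2 * σ)
    (by rw [Module.finrank_self]; push_cast; linarith)
  refine h.congr (Eventually.of_forall fun s => ?_)
  simp only [Real.norm_eq_abs, sq_abs]
  ring_nf

lemma lintegral_ofReal_mul_enorm_sq {α E : Type*} [MeasurableSpace α] [NormedAddCommGroup E]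
    {μ : Measure α} {w : α → ℝ} (hw : ∀ x, 0 ≤ w x) {f : α → E}
    (hf : Integrable (fun x => w x * ‖f x‖ ^ 2) μ) :
    ∫⁻ x, ENNReal.ofReal (w x) * ‖f x‖ₑ ^ 2 ∂μ = ENNReal.ofReal (∫ x, w x * ‖f x‖ ^ 2 ∂μ) := by
  rw [ofReal_integral_eq_lintegral_ofReal hf
    (Eventually.of_forall fun x => mul_nonneg (hw x) (by positivity))]
  refine lintegral_congr fun x => ?_
  rw [ENNReal.ofReal_mul (hw x), ENNReal.ofReal_pow (norm_nonneg _), ofReal_norm]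

section ShearFlow

variable {Y : Type*} [MeasurableSpace Y] {ν : Measure Y} [SFinite ν]

theorem lintegral_inv_weight_mul_sq_enorm_shear_integral_le {E : Type*} [NormedAddCommGroup E]
    [NormedSpace ℝ E] [MeasurableSpace E] [BorelSpace E] {w : ℝ → ℝ} (hw : Measurable w)
    (hw0 : ∀ s, 0 < w s)
    {ℓ : ℝ} (hℓ : 0 < ℓ) {ψ : Y → ℝ} (hψℓ : ∀ y, ℓ ≤ ψ y)
    {f : ℝ × Y → E} (hf : Measurable f) (a b : ℝ) :
    ∫⁻ x, ENNReal.ofReal (w x.1)⁻¹ * ‖∫ t in a..b, f (x.1 + t * ψ x.2, x.2)‖ₑ ^ 2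
        ∂(volume.prod ν)
      ≤ ENNReal.ofReal ℓ⁻¹ ^ 2 * (∫⁻ s, ENNReal.ofReal (w s)⁻¹) ^ 2
        * ∫⁻ x, ENNReal.ofReal (w x.1) * ‖f x‖ₑ ^ 2 ∂(volume.prod ν) := by
  set K := ∫⁻ s, ENNReal.ofReal (w s)⁻¹
  set φ : ℝ × Y → ℝ≥0∞ := fun x => ENNReal.ofReal (w x.1) * ‖f x‖ₑ ^ 2
  have hφ : Measurable φ := by fun_prop
  have fiber : ∀ x : ℝ × Y, ‖∫ t in a..b, f (x.1 + t * ψ x.2, x.2)‖ₑ ^ 2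
      ≤ ENNReal.ofReal ℓ⁻¹ ^ 2 * K * ∫⁻ s, φ (s, x.2) := fun x => by
    have hψ : 0 < ψ x.2 := hℓ.trans_le (hψℓ x.2)
    calc ‖∫ t in a..b, f (x.1 + t * ψ x.2, x.2)‖ₑ ^ 2
        ≤ ENNReal.ofReal (ψ x.2)⁻¹ ^ 2 * (K * ∫⁻ s, φ (s, x.2)) :=
          sq_enorm_intervalIntegral_comp_add_mul_le hw hw0 (g := fun s => f (s, x.2))
            (by fun_prop) a b x.1 hψ
      _ ≤ _ := by
          rw [← mul_assoc]
          gcongr ?_ ^ 2 * _ * _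
          exact ENNReal.ofReal_le_ofReal (inv_anti₀ hℓ (hψℓ x.2))
  calc ∫⁻ x, ENNReal.ofReal (w x.1)⁻¹ * ‖∫ t in a..b, f (x.1 + t * ψ x.2, x.2)‖ₑ ^ 2
        ∂(volume.prod ν)
      ≤ ∫⁻ x, ENNReal.ofReal (w x.1)⁻¹ * (ENNReal.ofReal ℓ⁻¹ ^ 2 * K * ∫⁻ s, φ (s, x.2))
        ∂(volume.prod ν) := lintegral_mono fun x => by gcongr; exact fiber x
    _ = K * (ENNReal.ofReal ℓ⁻¹ ^ 2 * K * ∫⁻ y, ∫⁻ s, φ (s, y) ∂volume ∂ν) := by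
        rw [lintegral_prod_mul (f := fun s => ENNReal.ofReal (w s)⁻¹)
            (g := fun y => ENNReal.ofReal ℓ⁻¹ ^ 2 * K * ∫⁻ s, φ (s, y)) (by fun_prop)
            (hφ.lintegral_prod_left'.const_mul _).aemeasurable,
          lintegral_const_mul _ hφ.lintegral_prod_left']
    _ = _ := by
        rw [← lintegral_prod_symm' φ hφ]
        ring

theorem lintegral_weight_mul_sq_enorm_shear_average_le {E : Type*} [NormedAddCommGroup E]
    [NormedSpace ℝ E] [MeasurableSpace E] [BorelSpace E] {σ : ℝ} (hσ : 1 / 2 < σ)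
    {ℓ : ℝ} (hℓ : 0 < ℓ) {ψ : Y → ℝ} (hψℓ : ∀ y, ℓ ≤ ψ y)
    {f : ℝ × Y → E} (hf : Measurable f)
    (hfσ : Integrable (fun x : ℝ × Y => (1 + x.1 ^ 2) ^ σ * ‖f x‖ ^ 2) (volume.prod ν))
    {T : ℝ} (hT : 0 ≤ T) :
    ∫⁻ x, ENNReal.ofReal ((1 + x.1 ^ 2) ^ (-σ))
        * ‖(2 * T)⁻¹ • ∫ t in (-T)..T, f (x.1 + t * ψ x.2, x.2)‖ₑ ^ 2 ∂(volume.prod ν)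
      ≤ ENNReal.ofReal (((∫ s, (1 + s ^ 2) ^ (-σ)) / (2 * ℓ) * T⁻¹) ^ 2
          * ∫ x, (1 + x.1 ^ 2) ^ σ * ‖f x‖ ^ 2 ∂(volume.prod ν)) := by
  set K := ∫ s : ℝ, (1 + s ^ 2) ^ (-σ)
  have rpow_neg_eq : ∀ s : ℝ, (1 + s ^ 2) ^ (-σ) = ((1 + s ^ 2) ^ σ)⁻¹ := fun s =>
    Real.rpow_neg (by positivity) σ
  have lintegral_K : ∫⁻ s, ENNReal.ofReal ((1 + s ^ 2) ^ σ)⁻¹ = ENNReal.ofReal K := by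
    simp_rw [← rpow_neg_eq]
    exact (ofReal_integral_eq_lintegral_ofReal (integrable_one_add_sq_rpow_neg hσ)
      (Eventually.of_forall fun s => by positivity)).symm
  have core := lintegral_inv_weight_mul_sq_enorm_shear_integral_le (ν := ν)
    (w := fun s => (1 + s ^ 2) ^ σ) (by fun_prop) (fun s => by positivity) hℓ hψℓ hf (-T) T
  rw [lintegral_K, lintegral_ofReal_mul_enorm_sq (fun x => by positivity) hfσ] at core
  calc ∫⁻ x, ENNReal.ofReal ((1 + x.1 ^ 2) ^ (-σ))
        * ‖(2 * T)⁻¹ • ∫ t in (-T)..T, f (x.1 + t * ψ x.2, x.2)‖ₑ ^ 2 ∂(volume.prod ν)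
      = ENNReal.ofReal ((2 * T)⁻¹) ^ 2 * ∫⁻ x, ENNReal.ofReal ((1 + x.1 ^ 2) ^ σ)⁻¹
        * ‖∫ t in (-T)..T, f (x.1 + t * ψ x.2, x.2)‖ₑ ^ 2 ∂(volume.prod ν) := by
        rw [← lintegral_const_mul' _ _ (by finiteness)]
        refine lintegral_congr fun x => ?_
        rw [enorm_smul, Real.enorm_eq_ofReal (by positivity), rpow_neg_eq]
        ring
    _ ≤ ENNReal.ofReal ((2 * T)⁻¹) ^ 2 * (ENNReal.ofReal ℓ⁻¹ ^ 2 * ENNReal.ofReal K ^ 2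
        * ENNReal.ofReal (∫ x, (1 + x.1 ^ 2) ^ σ * ‖f x‖ ^ 2 ∂(volume.prod ν))) := by
        gcongr
    _ = _ := by
        rw [← ENNReal.ofReal_pow (by positivity), ← ENNReal.ofReal_pow (by positivity),
          ← ENNReal.ofReal_pow (by positivity), ← ENNReal.ofReal_mul (by positivity),
          ← ENNReal.ofReal_mul (by positivity), ← ENNReal.ofReal_mul (by positivity)]
        congr 1
        field_simp

theorem lintegral_weight_mul_sq_enorm_shear_average_le_rpow {E : Type*} [NormedAddCommGroup E]
    [NormedSpace ℝ E] [MeasurableSpace E] [BorelSpace E] {σ : ℝ} (hσ : 1 / 2 < σ)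
    {ℓ : ℝ} (hℓ : 0 < ℓ) {ψ : Y → ℝ} (hψℓ : ∀ y, ℓ ≤ ψ y)
    {f : ℝ × Y → E} (hf : Measurable f)
    (hfσ : Integrable (fun x : ℝ × Y => (1 + x.1 ^ 2) ^ σ * ‖f x‖ ^ 2) (volume.prod ν))
    {C : ℝ} (hC : (∫ s, (1 + s ^ 2) ^ (-σ)) / (2 * ℓ) ≤ C) {T : ℝ} (hT : 1 ≤ T) :
    ∫⁻ x, ENNReal.ofReal ((1 + x.1 ^ 2) ^ (-σ))
        * ‖(2 * T)⁻¹ • ∫ t in (-T)..T, f (x.1 + t * ψ x.2, x.2)‖ₑ ^ 2 ∂(volume.prod ν)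
      ≤ ENNReal.ofReal ((C * T ^ (-(1 / 3 : ℝ))
          * Real.sqrt (∫ x, (1 + x.1 ^ 2) ^ σ * ‖f x‖ ^ 2 ∂(volume.prod ν))) ^ 2) := by
  refine (lintegral_weight_mul_sq_enorm_shear_average_le hσ hℓ hψℓ hf hfσ
    (by positivity)).trans (ENNReal.ofReal_le_ofReal ?_)
  have inv_le_rpow : T⁻¹ ≤ T ^ (-(1 / 3 : ℝ)) := by
    rw [← Real.rpow_neg_one]
    exact Real.rpow_le_rpow_of_exponent_le hT (by norm_num)
  have hC0 : 0 ≤ C := le_trans (by positivity) hC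
  rw [mul_pow _ (Real.sqrt _), Real.sq_sqrt (by positivity)]
  gcongr

end ShearFlow

theorem stmt_13_general (σ ℓ L : ℝ) (hσ : 1/2 < σ) (hℓ : 0 < ℓ) :
    ∃ C : ℝ, 0 < C ∧
      ∀ (d : ℕ), 2 ≤ d →
      ∀ ψ : EuclideanSpace ℝ (Fin (d-1)) → ℝ, Measurable ψ →
        (∀ x', ℓ ≤ ψ x') →
        (∀ x' y', |ψ x' - ψ y'| ≤ L * dist x' y') →
      (∀ f : ℝ × EuclideanSpace ℝ (Fin (d-1)) → ℂ, Measurable f →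
        Integrable (fun x : ℝ × EuclideanSpace ℝ (Fin (d-1)) => (1 + x.1^2) ^ σ * ‖f x‖^2) →
        ∀ T : ℝ, 1 ≤ T →
          (∫⁻ x : ℝ × EuclideanSpace ℝ (Fin (d-1)),
              ENNReal.ofReal ((1 + x.1^2) ^ (-σ)) *
                (‖(2*T)⁻¹ • ∫ t in (-T)..T, f (x.1 + t * ψ x.2, x.2)‖₊ : ℝ≥0∞) ^ 2
              ∂volume)
            ≤ ENNReal.ofReal ((C * T ^ (-(1/3 : ℝ)) *
                Real.sqrt (∫ x : ℝ × EuclideanSpace ℝ (Fin (d-1)),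
                  (1 + x.1^2) ^ σ * ‖f x‖^2)) ^ 2)) ∧
      -- in particular, uniform (operator-norm) convergence of `A_T` to `0` as `T → ∞`:
      (∀ d : ℕ, 2 ≤ d →
        ∀ ψ : EuclideanSpace ℝ (Fin (d-1)) → ℝ, Measurable ψ →
        (∀ x', ℓ ≤ ψ x') →
        (∀ x' y', |ψ x' - ψ y'| ≤ L * dist x' y') →
        ∀ ε : ℝ, 0 < ε → ∃ T₀ : ℝ, ∀ T : ℝ, T₀ ≤ T →
          ∀ f : ℝ × EuclideanSpace ℝ (Fin (d-1)) → ℂ, Measurable f →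
            Integrable
              (fun x : ℝ × EuclideanSpace ℝ (Fin (d-1)) => (1 + x.1^2) ^ σ * ‖f x‖^2) →
            (∫ x : ℝ × EuclideanSpace ℝ (Fin (d-1)), (1 + x.1^2) ^ σ * ‖f x‖^2) ≤ 1 →
            (∫⁻ x : ℝ × EuclideanSpace ℝ (Fin (d-1)),
                ENNReal.ofReal ((1 + x.1^2) ^ (-σ)) *
                  (‖(2*T)⁻¹ • ∫ t in (-T)..T, f (x.1 + t * ψ x.2, x.2)‖₊ : ℝ≥0∞) ^ 2
                ∂volume)
              ≤ ENNReal.ofReal (ε ^ 2)) := by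
  set C := (∫ s : ℝ, (1 + s ^ 2) ^ (-σ)) / (2 * ℓ) + 1
  have hC : 0 < C := by positivity
  have hKC : (∫ s : ℝ, (1 + s ^ 2) ^ (-σ)) / (2 * ℓ) ≤ C := le_add_of_nonneg_right zero_le_one
  refine ⟨C, hC, fun d _ ψ _ hψℓ _ =>
    ⟨fun f hf hfσ T hT => lintegral_weight_mul_sq_enorm_shear_average_le_rpow
      hσ hℓ hψℓ hf hfσ hKC hT, fun d _ ψ _ hψℓ _ ε hε => ?_⟩⟩
  have decay : Tendsto (fun T : ℝ => C * T ^ (-(1 / 3 : ℝ))) atTop (𝓝 0) := by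
    simpa using (tendsto_rpow_neg_atTop (by norm_num : (0 : ℝ) < 1 / 3)).const_mul C
  obtain ⟨T₀, hT₀⟩ := eventually_atTop.1
    ((decay.eventually (ge_mem_nhds hε)).and (eventually_ge_atTop 1))
  refine ⟨T₀, fun T hT f hf hfσ hf1 => ?_⟩
  obtain ⟨small, one_le⟩ := hT₀ T hT
  have hCT : 0 ≤ C * T ^ (-(1 / 3 : ℝ)) := mul_nonneg hC.le (Real.rpow_nonneg (by linarith) _)
  refine (lintegral_weight_mul_sq_enorm_shear_average_le_rpow
    hσ hℓ hψℓ hf hfσ hKC one_le).trans (ENNReal.ofReal_le_ofReal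
    (pow_le_pow_left₀ (mul_nonneg hCT (Real.sqrt_nonneg _)) ?_ 2))
  calc C * T ^ (-(1 / 3 : ℝ)) * Real.sqrt (∫ x, (1 + x.1 ^ 2) ^ σ * ‖f x‖ ^ 2)
      ≤ C * T ^ (-(1 / 3 : ℝ)) := mul_le_of_le_one_right hCT (Real.sqrt_le_one.2 hf1)
    _ ≤ ε := small

/-- Let `d ≥ 2`, `ℓ > 0`, `L ≥ 0`, let `ψ : ℝ^{d-1} → ℝ` satisfy `ψ ≥ ℓ` and
be `L`-Lipschitz, and let `σ > 1/2`.  For the time averages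
`(A_T f)(x₁,x') = (1/(2T)) ∫_{-T}^{T} f(x₁ + tψ(x'), x') dt` there is a constant `C`
depending only on `σ`, `ℓ` and `L` such that for all `f ∈ L^{2,σ}(ℝ^d)` and all `T ≥ 1`,
`‖A_T f‖_{L^{2,-σ}} ≤ C T^{-1/3} ‖f‖_{L^{2,σ}}` (stated with both sides squared, the left
side as a lower Lebesgue integral); in particular `A_T → 0`, the orthogonal projection onto
the flow-invariant functions in `L²(ℝ^d)`, in the operator norm from `L^{2,σ}` to `L^{2,-σ}`
as `T → ∞`.  Here `ℝ^d` is modelled as `ℝ × ℝ^{d-1}`, points written `x = (x₁, x')`. -/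
theorem stmt_13 (σ ℓ L : ℝ) (hσ : 1/2 < σ) (hℓ : 0 < ℓ) (hL : 0 ≤ L) :
    ∃ C : ℝ, 0 < C ∧
      ∀ (d : ℕ), 2 ≤ d →
      ∀ ψ : EuclideanSpace ℝ (Fin (d-1)) → ℝ, Measurable ψ →
        (∀ x', ℓ ≤ ψ x') →
        (∀ x' y', |ψ x' - ψ y'| ≤ L * dist x' y') →
      (∀ f : ℝ × EuclideanSpace ℝ (Fin (d-1)) → ℂ, Measurable f →
        Integrable (fun x : ℝ × EuclideanSpace ℝ (Fin (d-1)) => (1 + x.1^2) ^ σ * ‖f x‖^2) →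
        ∀ T : ℝ, 1 ≤ T →
          (∫⁻ x : ℝ × EuclideanSpace ℝ (Fin (d-1)),
              ENNReal.ofReal ((1 + x.1^2) ^ (-σ)) *
                (‖(2*T)⁻¹ • ∫ t in (-T)..T, f (x.1 + t * ψ x.2, x.2)‖₊ : ℝ≥0∞) ^ 2
              ∂volume)
            ≤ ENNReal.ofReal ((C * T ^ (-(1/3 : ℝ)) *
                Real.sqrt (∫ x : ℝ × EuclideanSpace ℝ (Fin (d-1)),
                  (1 + x.1^2) ^ σ * ‖f x‖^2)) ^ 2)) ∧
      -- in particular, uniform (operator-norm) convergence of `A_T` to `0` as `T → ∞`: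
      (∀ d : ℕ, 2 ≤ d →
        ∀ ψ : EuclideanSpace ℝ (Fin (d-1)) → ℝ, Measurable ψ →
        (∀ x', ℓ ≤ ψ x') →
        (∀ x' y', |ψ x' - ψ y'| ≤ L * dist x' y') →
        ∀ ε : ℝ, 0 < ε → ∃ T₀ : ℝ, ∀ T : ℝ, T₀ ≤ T →
          ∀ f : ℝ × EuclideanSpace ℝ (Fin (d-1)) → ℂ, Measurable f →
            Integrable
              (fun x : ℝ × EuclideanSpace ℝ (Fin (d-1)) => (1 + x.1^2) ^ σ * ‖f x‖^2) →
            (∫ x : ℝ × EuclideanSpace ℝ (Fin (d-1)), (1 + x.1^2) ^ σ * ‖f x‖^2) ≤ 1 →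
            (∫⁻ x : ℝ × EuclideanSpace ℝ (Fin (d-1)),
                ENNReal.ofReal ((1 + x.1^2) ^ (-σ)) *
                  (‖(2*T)⁻¹ • ∫ t in (-T)..T, f (x.1 + t * ψ x.2, x.2)‖₊ : ℝ≥0∞) ^ 2
                ∂volume)
              ≤ ENNReal.ofReal (ε ^ 2)) :=
  stmt_13_general σ ℓ L hσ hℓ
end

section
/- Let (Ω,μ) be a σ-finite measure space, m : Ω → ℝ measurable, and let H be the multiplication operator Hu = mu on L²(Ω,μ) with domain D(H) = {u ∈ L²(μ) : mu ∈ L²(μ)}. For λ ∈ ℝ set V_λ = {u ∈ L²(μ) : u = 0 almost everywhere on {m > λ}}. Then: (a) V_λ is a closed subspace; its orthogonal projection P_λ maps D(H) into D(H) and satisfies P_λ H u = H P_λ u for all u ∈ D(H); and (Hu,u) ≤ λ (u,u) for all u ∈ V_λ ∩ D(H). (b) Maximality: if W ⊆ L²(μ) is any closed subspace whose orthogonal projection P maps D(H) into D(H) with P H u = H P u for all u ∈ D(H), and (Hu,u) ≤ λ (u,u) for all u ∈ W ∩ D(H), then W ⊆ V_λ. Hence V_λ = E(λ)L²(μ), where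 {E(λ)} is the spectral family of H. -/
/-!
The multiplication operator commutes with multiplication by the indicator of `{m ≤ λ}`, which is
the orthogonal projection onto `V_λ`, and `(Hu, u) - λ‖u‖² = ∫ (m - λ) |u|²`; this gives (a).

For maximality, a projection `P` commuting with `H` commutes with the resolvents `(m - z)⁻¹`,
`z ∉ ℝ`, hence with multiplication by every function in the closed algebra of bounded continuous
functions they generate. That algebra contains `φ(t) = (t - λ) / ((t - λ)² + 1)`, the mean of the
resolvents at `λ ± i`, and by Weierstrass also `θ = max(φ, 0)`. For `w ∈ W`, the vector
`v = (m - λ - i)⁻¹ θ(m) w` therefore lies in `W ∩ D(H)` and vanishes on `{m ≤ λ}`, so the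
integrand of `(Hv, v) - λ‖v‖²` is nonnegative; the form bound forces `v = 0`, and as
`(m - λ - i)⁻¹ θ(m)` does not vanish on `{m > λ}`, neither can `w` there.
-/

open MeasureTheory Complex Filter Topology
open scoped ENNReal

/-- `P` is the orthogonal projection of an inner product space onto the set `V`:
every `P u` lies in `V` and `u - P u` is orthogonal to `V`. -/
def IsOrthogonalProjectionOnto {X : Type*} [NormedAddCommGroup X] [InnerProductSpace ℂ X]
    (V : Set X) (P : X →L[ℂ] X) : Prop :=
  ∀ u : X, P u ∈ V ∧ ∀ v ∈ V, @inner ℂ _ _ (u - P u) v = (0 : ℂ)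

open BoundedContinuousFunction

namespace MeasureTheory.Lp

variable {Ω : Type*} (𝕜 E : Type*) [MeasurableSpace Ω] [NormedField 𝕜] [NormedAddCommGroup E]
  [NormedSpace 𝕜 E] (p : ℝ≥0∞) [Fact (1 ≤ p)] (μ : Measure Ω)

noncomputable def vanishingOn (s : Set Ω) : Submodule 𝕜 (Lp E p μ) :=
  (LpToLpRestrictCLM Ω E 𝕜 μ p s : Lp E p μ →ₗ[𝕜] Lp E p (μ.restrict s)).ker

variable {𝕜 E p μ}

theorem mem_vanishingOn {s : Set Ω} (hs : MeasurableSet s) {u : Lp E p μ} :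
    u ∈ vanishingOn 𝕜 E p μ s ↔ ∀ᵐ x ∂μ, x ∈ s → u x = 0 := by
  rw [vanishingOn, LinearMap.mem_ker, ContinuousLinearMap.coe_coe, Lp.eq_zero_iff_ae_eq_zero,
    ← ae_restrict_iff' hs]
  exact (LpToLpRestrictCLM_coeFn 𝕜 s u).congr_left

theorem isClosed_vanishingOn (s : Set Ω) : IsClosed (vanishingOn 𝕜 E p μ s : Set (Lp E p μ)) :=
  ContinuousLinearMap.isClosed_ker _

end MeasureTheory.Lp

namespace IsOrthogonalProjectionOnto

variable {X : Type*} [NormedAddCommGroup X] [InnerProductSpace ℂ X] {V : Submodule ℂ X}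
  {P : X →L[ℂ] X}

theorem apply_eq_of_orthogonal (hP : IsOrthogonalProjectionOnto (V : Set X) P) {u q : X}
    (hq : q ∈ V) (horth : ∀ v ∈ V, inner ℂ (u - q) v = 0) : P u = q := by
  have hd : P u - q ∈ V := V.sub_mem (hP u).1 hq
  have : inner ℂ (P u - q) (P u - q) = 0 := by
    nth_rw 1 [show P u - q = (u - q) - (u - P u) by abel]
    rw [inner_sub_left, horth _ hd, (hP u).2 _ hd, sub_zero]
  exact sub_eq_zero.mp (inner_self_eq_zero.mp this)

theorem apply_of_mem (hP : IsOrthogonalProjectionOnto (V : Set X) P) {w : X} (hw : w ∈ V) :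
    P w = w :=
  hP.apply_eq_of_orthogonal hw fun v _ => by rw [sub_self, inner_zero_left]

theorem map_mem_of_commute (hP : IsOrthogonalProjectionOnto (V : Set X) P) {T : X →L[ℂ] X}
    (hT : Commute P T) {w : X} (hw : w ∈ V) : T w ∈ V := by
  have : T w = P (T w) := by
    rw [← mul_apply_eq_comp P T, hT.eq, mul_apply_eq_comp, hP.apply_of_mem hw]
  exact this ▸ (hP _).1

end IsOrthogonalProjectionOnto

theorem IsOrthogonalProjectionOnto.ae_eq_indicator_of_vanishingOn {Ω E : Type*}
    [MeasurableSpace Ω] {μ : Measure Ω} [NormedAddCommGroup E] [InnerProductSpace ℂ E]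
    {s : Set Ω} (hs : MeasurableSet s) {P : Lp E 2 μ →L[ℂ] Lp E 2 μ}
    (hP : IsOrthogonalProjectionOnto (Lp.vanishingOn ℂ E 2 μ s : Set (Lp E 2 μ)) P)
    (w : Lp E 2 μ) : (P w : Ω → E) =ᵐ[μ] sᶜ.indicator w := by
  have hq := ((Lp.memLp w).indicator hs.compl).coeFn_toLp
  rw [hP.apply_eq_of_orthogonal (q := ((Lp.memLp w).indicator hs.compl).toLp _)]
  · exact hq
  · rw [Lp.mem_vanishingOn hs]
    filter_upwards [hq] with x hx hxs
    rw [hx, Set.indicator_of_notMem (Set.notMem_compl_iff.mpr hxs)]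
  · intro v hv
    rw [Lp.mem_vanishingOn hs] at hv
    rw [L2.inner_def, ← integral_zero Ω ℂ]
    refine integral_congr_ae ?_
    filter_upwards [Lp.coeFn_sub w (((Lp.memLp w).indicator hs.compl).toLp _), hq, hv]
      with x hsub hx hvx
    rw [hsub, Pi.sub_apply, hx]
    by_cases hxs : x ∈ s
    · rw [hvx hxs, inner_zero_right]
    · rw [Set.indicator_of_mem (Set.mem_compl hxs), sub_self, inner_zero_left]

theorem BoundedContinuousFunction.aeval_apply {X : Type*} [TopologicalSpace X] (f : X →ᵇ ℂ)
    (p : Polynomial ℝ) (x : X) : Polynomial.aeval f p x = Polynomial.aeval (f x) p :=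
  (Polynomial.aeval_algHom_apply
    ((ContinuousMap.evalAlgHom ℝ ℂ x).comp (toContinuousMapₐ ℝ)) f p).symm

theorem Subalgebra.comp_mem_of_isClosed {X : Type*} [TopologicalSpace X]
    {A : Subalgebra ℝ (X →ᵇ ℂ)} (hA : IsClosed (A : Set (X →ᵇ ℂ))) {f g : X →ᵇ ℂ} (hf : f ∈ A)
    {φ : X → ℝ} (hfφ : ∀ x, f x = φ x) {a b : ℝ} (hφ : ∀ x, φ x ∈ Set.Icc a b)
    {ψ : ℝ → ℝ} (hψ : ContinuousOn ψ (Set.Icc a b)) (hg : ∀ x, g x = ψ (φ x)) : g ∈ A := by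
  refine hA.closure_subset (Metric.mem_closure_iff.mpr fun ε hε => ?_)
  obtain ⟨p, hp⟩ := exists_polynomial_near_of_continuousOn a b ψ hψ (ε / 2) (half_pos hε)
  refine ⟨Polynomial.aeval f p,
    Polynomial.aeval_subalgebra_coe p A ⟨f, hf⟩ ▸ (Polynomial.aeval (⟨f, hf⟩ : A) p).2, ?_⟩
  refine ((BoundedContinuousFunction.dist_le (half_pos hε).le).mpr fun x => ?_).trans_lt
    (half_lt_self hε)
  rw [hg, BoundedContinuousFunction.aeval_apply, hfφ, ← Complex.coe_algebraMap,
    Polynomial.aeval_algebraMap_apply, Complex.coe_algebraMap, Complex.isometry_ofReal.dist_eq,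
    dist_comm, Polynomial.coe_aeval_eq_eval, Real.dist_eq]
  exact (hp _ (hφ x)).le

section ResolventFun

variable {z : ℂ}

theorem ofReal_sub_ne_zero_of_im_ne_zero (hz : z.im ≠ 0) (t : ℝ) : (t : ℂ) - z ≠ 0 := fun h =>
  hz (by simpa using congrArg Complex.im h)

theorem norm_inv_ofReal_sub_le (hz : z.im ≠ 0) (t : ℝ) : ‖((t : ℂ) - z)⁻¹‖ ≤ |z.im|⁻¹ := by
  rw [norm_inv]
  refine inv_anti₀ (abs_pos.mpr hz) ?_
  simpa using Complex.abs_im_le_norm ((t : ℂ) - z)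

noncomputable def resolventFun (z : ℂ) (hz : z.im ≠ 0) : ℝ →ᵇ ℂ :=
  .ofNormedAddCommGroup (fun t => ((t : ℂ) - z)⁻¹)
    ((continuous_ofReal.sub continuous_const).inv₀ (ofReal_sub_ne_zero_of_im_ne_zero hz))
    |z.im|⁻¹ (norm_inv_ofReal_sub_le hz)

theorem resolventFun_apply (hz : z.im ≠ 0) (t : ℝ) : resolventFun z hz t = ((t : ℂ) - z)⁻¹ :=
  rfl

end ResolventFun

noncomputable def resolventRe (lam t : ℝ) : ℝ := (t - lam) / ((t - lam) ^ 2 + 1)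

theorem continuous_resolventRe (lam : ℝ) : Continuous (resolventRe lam) :=
  (continuous_id.sub continuous_const).div (by fun_prop) fun t => by positivity

theorem resolventRe_mem_Icc (lam t : ℝ) : resolventRe lam t ∈ Set.Icc (-1) 1 := by
  refine abs_le.mp ?_
  have hden : (0 : ℝ) < (t - lam) ^ 2 + 1 := by positivity
  rw [resolventRe, abs_div, abs_of_pos hden, div_le_one hden]
  nlinarith [abs_nonneg (t - lam), sq_abs (t - lam)]

theorem resolventRe_pos_iff {lam t : ℝ} : 0 < resolventRe lam t ↔ lam < t := by
  rw [resolventRe, div_pos_iff_of_pos_right (by positivity), sub_pos]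

theorem ofReal_resolventRe (lam t : ℝ) :
    (resolventRe lam t : ℂ) =
      2⁻¹ * (((t : ℂ) - (lam + I))⁻¹ + ((t : ℂ) - (lam - I))⁻¹) := by
  have hplus : (t : ℂ) - (lam + I) ≠ 0 := ofReal_sub_ne_zero_of_im_ne_zero (by simp) t
  have hminus : (t : ℂ) - (lam - I) ≠ 0 := ofReal_sub_ne_zero_of_im_ne_zero (by simp) t
  have hden : ((t - lam) ^ 2 + 1 : ℂ) ≠ 0 := by
    exact_mod_cast (by positivity : (t - lam) ^ 2 + 1 ≠ 0)
  rw [resolventRe]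
  push_cast
  field_simp
  ring_nf
  rw [I_sq]
  ring

noncomputable def cutoffFun (lam : ℝ) : ℝ →ᵇ ℂ :=
  .ofNormedAddCommGroup (fun t => ((max (resolventRe lam t) 0 : ℝ) : ℂ))
    (continuous_ofReal.comp ((continuous_resolventRe lam).max continuous_const)) 1 fun t => by
      rw [norm_real, Real.norm_eq_abs, abs_of_nonneg (le_max_right _ _)]
      exact max_le (resolventRe_mem_Icc lam t).2 zero_le_one

theorem cutoffFun_eq_zero_iff {lam t : ℝ} : cutoffFun lam t = 0 ↔ t ≤ lam := by
  rw [← not_lt, ← resolventRe_pos_iff]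
  change ((max (resolventRe lam t) 0 : ℝ) : ℂ) = 0 ↔ _
  rw [ofReal_eq_zero, max_eq_right_iff, not_lt]

def LinearPMap.CommutesWith {R E : Type*} [Ring R] [AddCommGroup E] [Module R E]
    (H : E →ₗ.[R] E) (P : E → E) : Prop :=
  ∀ u, ∀ hu : u ∈ H.domain, ∃ hPu : P u ∈ H.domain, H ⟨P u, hPu⟩ = P (H ⟨u, hu⟩)

section MultiplicationOperator

variable {Ω : Type*} [MeasurableSpace Ω] {μ : Measure Ω}

theorem re_inner_ae_eq_of_ae_eq_mul {g : Ω → ℝ} {u w : Lp ℂ 2 μ}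
    (hw : (w : Ω → ℂ) =ᵐ[μ] fun x => (g x : ℂ) * u x) :
    (fun x => (inner ℂ (w x) (u x)).re) =ᵐ[μ] fun x => g x * ‖u x‖ ^ 2 := by
  filter_upwards [hw] with x hx
  rw [hx, ← smul_eq_mul, inner_smul_left, conj_ofReal, re_ofReal_mul]
  exact congrArg _ (inner_self_eq_norm_sq (𝕜 := ℂ) (u x))

def IsMulOperator (H : Lp ℂ 2 μ →ₗ.[ℂ] Lp ℂ 2 μ) (m : Ω → ℝ) : Prop :=
  ∀ u v : Lp ℂ 2 μ, (u, v) ∈ H.graph ↔ (v : Ω → ℂ) =ᵐ[μ] fun x => (m x : ℂ) * u x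

section BoundedMultiplier

variable {m : Ω → ℝ}

theorem memLp_comp_mul (hm : Measurable m) (f : ℝ →ᵇ ℂ) (w : Lp ℂ 2 μ) :
    MemLp (fun x => f (m x) * w x) 2 μ :=
  MemLp.of_le_mul (c := ‖f‖) (Lp.memLp w)
    ((f.continuous.measurable.comp hm).aestronglyMeasurable.mul (Lp.aestronglyMeasurable w))
    (Eventually.of_forall fun x => by
      rw [norm_mul]
      exact mul_le_mul_of_nonneg_right (f.norm_coe_le_norm _) (norm_nonneg _))

noncomputable def mulCLM (hm : Measurable m) (f : ℝ →ᵇ ℂ) : Lp ℂ 2 μ →L[ℂ] Lp ℂ 2 μ :=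
  LinearMap.mkContinuous
    { toFun w := (memLp_comp_mul hm f w).toLp _
      map_add' u v := by
        rw [← MemLp.toLp_add]
        refine MemLp.toLp_congr _ _ ?_
        filter_upwards [Lp.coeFn_add u v] with x hx
        rw [hx, Pi.add_apply, Pi.add_apply, mul_add]
      map_smul' c u := by
        rw [RingHom.id_apply, ← MemLp.toLp_const_smul]
        refine MemLp.toLp_congr _ _ ?_
        filter_upwards [Lp.coeFn_smul c u] with x hx
        rw [hx, Pi.smul_apply, Pi.smul_apply, smul_eq_mul, smul_eq_mul, mul_left_comm] }
    ‖f‖ fun w => by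
      change ‖(memLp_comp_mul hm f w).toLp _‖ ≤ ‖f‖ * ‖w‖
      refine Lp.norm_le_mul_norm_of_ae_le_mul ?_
      filter_upwards [(memLp_comp_mul hm f w).coeFn_toLp] with x hx
      rw [hx, norm_mul]
      exact mul_le_mul_of_nonneg_right (f.norm_coe_le_norm _) (norm_nonneg _)

theorem coeFn_mulCLM (hm : Measurable m) (f : ℝ →ᵇ ℂ) (w : Lp ℂ 2 μ) :
    (mulCLM hm f w : Ω → ℂ) =ᵐ[μ] fun x => f (m x) * w x :=
  (memLp_comp_mul hm f w).coeFn_toLp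

theorem norm_mulCLM_le (hm : Measurable m) (f : ℝ →ᵇ ℂ) :
    ‖(mulCLM hm f : Lp ℂ 2 μ →L[ℂ] Lp ℂ 2 μ)‖ ≤ ‖f‖ :=
  LinearMap.mkContinuous_norm_le _ (norm_nonneg f) _

theorem mulCLM_ext (hm : Measurable m) {f : ℝ →ᵇ ℂ} {T : Lp ℂ 2 μ →L[ℂ] Lp ℂ 2 μ}
    (h : ∀ w, (T w : Ω → ℂ) =ᵐ[μ] fun x => f (m x) * w x) : mulCLM hm f = T :=
  ContinuousLinearMap.ext fun w => Lp.ext ((coeFn_mulCLM hm f w).trans (h w).symm)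

noncomputable def mulOp (hm : Measurable m) : (ℝ →ᵇ ℂ) →ₐ[ℂ] (Lp ℂ 2 μ →L[ℂ] Lp ℂ 2 μ) where
  toFun := mulCLM hm
  map_one' := mulCLM_ext hm fun w => by simp
  map_mul' f g := mulCLM_ext hm fun w => by
    filter_upwards [coeFn_mulCLM hm f (mulCLM hm g w), coeFn_mulCLM hm g w] with x hf hg
    rw [mul_apply_eq_comp, hf, hg, BoundedContinuousFunction.mul_apply, mul_assoc]
  map_zero' := mulCLM_ext hm fun w => by
    filter_upwards [Lp.coeFn_zero ℂ 2 μ] with x hx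
    rw [zero_apply, hx, BoundedContinuousFunction.coe_zero, Pi.zero_apply,
      Pi.zero_apply, zero_mul]
  map_add' f g := mulCLM_ext hm fun w => by
    filter_upwards [Lp.coeFn_add (mulCLM hm f w) (mulCLM hm g w), coeFn_mulCLM hm f w,
      coeFn_mulCLM hm g w] with x hx hf hg
    rw [_root_.add_apply, hx, Pi.add_apply, hf, hg, BoundedContinuousFunction.add_apply, add_mul]
  commutes' c := mulCLM_ext hm fun w => by
    filter_upwards [Lp.coeFn_smul c w] with x hx
    simp [hx, Algebra.algebraMap_eq_smul_one]

theorem coeFn_mulOp (hm : Measurable m) (f : ℝ →ᵇ ℂ) (w : Lp ℂ 2 μ) :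
    (mulOp hm f w : Ω → ℂ) =ᵐ[μ] fun x => f (m x) * w x :=
  coeFn_mulCLM hm f w

theorem continuous_mulOp (hm : Measurable m) : Continuous (mulOp (μ := μ) hm) :=
  AddMonoidHomClass.continuous_of_bound _ 1 fun f => by
    rw [one_mul]
    exact norm_mulCLM_le hm f

end BoundedMultiplier

namespace IsMulOperator

variable {H : Lp ℂ 2 μ →ₗ.[ℂ] Lp ℂ 2 μ} {m : Ω → ℝ} {z : ℂ}

theorem apply_ae_eq (hH : IsMulOperator H m) {u : Lp ℂ 2 μ} (hu : u ∈ H.domain) :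
    (H ⟨u, hu⟩ : Ω → ℂ) =ᵐ[μ] fun x => (m x : ℂ) * u x :=
  (hH u _).mp (H.mem_graph ⟨u, hu⟩)

theorem exists_mem_domain (hH : IsMulOperator H m) {u v : Lp ℂ 2 μ}
    (h : (v : Ω → ℂ) =ᵐ[μ] fun x => (m x : ℂ) * u x) : ∃ hu : u ∈ H.domain, H ⟨u, hu⟩ = v :=
  have hg := (hH u v).mpr h
  ⟨LinearPMap.mem_domain_of_mem_graph hg, ((LinearPMap.image_iff _).mpr hg).symm⟩

theorem ae_eq_sub_mul (hH : IsMulOperator H m) {u : Lp ℂ 2 μ} (hu : u ∈ H.domain) (lam : ℝ) :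
    ((H ⟨u, hu⟩ - (lam : ℂ) • u : Lp ℂ 2 μ) : Ω → ℂ) =ᵐ[μ]
      fun x => ((m x - lam : ℝ) : ℂ) * u x := by
  filter_upwards [Lp.coeFn_sub (H ⟨u, hu⟩) ((lam : ℂ) • u), Lp.coeFn_smul (lam : ℂ) u,
    hH.apply_ae_eq hu] with x hsub hsmul hHu
  rw [hsub, Pi.sub_apply, hsmul, hHu, Pi.smul_apply, smul_eq_mul]
  push_cast
  ring

theorem re_inner_sub_eq_integral (hH : IsMulOperator H m) {u : Lp ℂ 2 μ} (hu : u ∈ H.domain)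
    (lam : ℝ) :
    (inner ℂ (H ⟨u, hu⟩) u).re - lam * ‖u‖ ^ 2 = ∫ x, (m x - lam) * ‖u x‖ ^ 2 ∂μ := by
  calc (inner ℂ (H ⟨u, hu⟩) u).re - lam * ‖u‖ ^ 2
      = (inner ℂ (H ⟨u, hu⟩ - (lam : ℂ) • u) u).re := by
        rw [inner_sub_left, inner_smul_left, conj_ofReal, sub_re, re_ofReal_mul]
        exact congrArg (_ - lam * ·) (inner_self_eq_norm_sq (𝕜 := ℂ) u).symm
    _ = ∫ x, (inner ℂ ((H ⟨u, hu⟩ - (lam : ℂ) • u : Lp ℂ 2 μ) x) (u x)).re ∂μ := by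
        rw [L2.inner_def]
        exact (integral_re (𝕜 := ℂ) (L2.integrable_inner _ _)).symm
    _ = ∫ x, (m x - lam) * ‖u x‖ ^ 2 ∂μ :=
        integral_congr_ae (re_inner_ae_eq_of_ae_eq_mul (hH.ae_eq_sub_mul hu lam))

theorem integrable_mul_norm_sq (hH : IsMulOperator H m) {u : Lp ℂ 2 μ} (hu : u ∈ H.domain)
    (lam : ℝ) : Integrable (fun x => (m x - lam) * ‖u x‖ ^ 2) μ :=
  (L2.integrable_inner (𝕜 := ℂ) _ u).re.congr
    (re_inner_ae_eq_of_ae_eq_mul (hH.ae_eq_sub_mul hu lam))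

theorem re_inner_le_of_ae_vanishing (hH : IsMulOperator H m) {lam : ℝ} {u : Lp ℂ 2 μ}
    (hu : u ∈ H.domain) (hvan : ∀ᵐ x ∂μ, lam < m x → u x = 0) :
    (inner ℂ (H ⟨u, hu⟩) u).re ≤ lam * ‖u‖ ^ 2 := by
  rw [← sub_nonpos, hH.re_inner_sub_eq_integral hu]
  refine integral_nonpos_of_ae ?_
  filter_upwards [hvan] with x hx
  rcases lt_or_ge lam (m x) with hlt | hle
  · simp [hx hlt]
  · exact mul_nonpos_of_nonpos_of_nonneg (sub_nonpos.mpr hle) (by positivity)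

theorem ae_eq_zero_of_re_inner_le (hH : IsMulOperator H m) {lam : ℝ} {u : Lp ℂ 2 μ}
    (hu : u ∈ H.domain) (hform : (inner ℂ (H ⟨u, hu⟩) u).re ≤ lam * ‖u‖ ^ 2)
    (hvan : ∀ᵐ x ∂μ, m x ≤ lam → u x = 0) : ∀ᵐ x ∂μ, u x = 0 := by
  have hnonneg : 0 ≤ᵐ[μ] fun x => (m x - lam) * ‖u x‖ ^ 2 := by
    filter_upwards [hvan] with x hx
    rcases le_or_gt (m x) lam with hle | hlt
    · simp [hx hle]
    · exact mul_nonneg (sub_nonneg.mpr hlt.le) (by positivity)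
  have hzero := (integral_eq_zero_iff_of_nonneg_ae hnonneg (hH.integrable_mul_norm_sq hu lam)).mp
    (le_antisymm (by rw [← hH.re_inner_sub_eq_integral hu]; linarith)
      (integral_nonneg_of_ae hnonneg))
  filter_upwards [hzero, hvan] with x hx hxvan
  rcases le_or_gt (m x) lam with hle | hlt
  · exact hxvan hle
  · simpa [(sub_pos.mpr hlt).ne'] using hx

theorem projection_vanishingOn_commutes (hH : IsMulOperator H m) {s : Set Ω} (hs : MeasurableSet s)
    {P : Lp ℂ 2 μ →L[ℂ] Lp ℂ 2 μ}
    (hP : IsOrthogonalProjectionOnto (Lp.vanishingOn ℂ ℂ 2 μ s : Set (Lp ℂ 2 μ)) P) :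
    H.CommutesWith P := fun u hu => hH.exists_mem_domain <| by
  filter_upwards [hP.ae_eq_indicator_of_vanishingOn hs (H ⟨u, hu⟩),
    hP.ae_eq_indicator_of_vanishingOn hs u, hH.apply_ae_eq hu] with x hPHu hPu hHu
  by_cases hx : x ∈ sᶜ <;> simp [hx, hPHu, hPu, hHu]

theorem exists_mem_domain_mulOp_resolventFun (hH : IsMulOperator H m) (hm : Measurable m)
    (hz : z.im ≠ 0) (u : Lp ℂ 2 μ) :
    ∃ h : mulOp hm (resolventFun z hz) u ∈ H.domain,
      H ⟨_, h⟩ = u + z • mulOp hm (resolventFun z hz) u := by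
  refine hH.exists_mem_domain ?_
  filter_upwards [Lp.coeFn_add u (z • mulOp hm (resolventFun z hz) u),
    Lp.coeFn_smul z (mulOp hm (resolventFun z hz) u), coeFn_mulOp hm (resolventFun z hz) u]
    with x hadd hsmul hR
  have hne := ofReal_sub_ne_zero_of_im_ne_zero hz (m x)
  rw [hadd, Pi.add_apply, hsmul, Pi.smul_apply, hR, resolventFun_apply, smul_eq_mul]
  field_simp
  ring

theorem eq_mulOp_resolventFun (hH : IsMulOperator H m) (hm : Measurable m) (hz : z.im ≠ 0)
    {u v : Lp ℂ 2 μ} (hv : v ∈ H.domain) (h : H ⟨v, hv⟩ = u + z • v) :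
    v = mulOp hm (resolventFun z hz) u := by
  refine Lp.ext ?_
  filter_upwards [hH.apply_ae_eq hv, Lp.coeFn_add u (z • v), Lp.coeFn_smul z v,
    coeFn_mulOp hm (resolventFun z hz) u] with x hHv hadd hsmul hR
  rw [h, hadd, Pi.add_apply, hsmul, Pi.smul_apply, smul_eq_mul] at hHv
  rw [hR, resolventFun_apply, eq_inv_mul_iff_mul_eq₀ (ofReal_sub_ne_zero_of_im_ne_zero hz (m x))]
  linear_combination -hHv

theorem commute_mulOp_resolventFun (hH : IsMulOperator H m) (hm : Measurable m)
    {P : Lp ℂ 2 μ →L[ℂ] Lp ℂ 2 μ} (hPH : H.CommutesWith P) (hz : z.im ≠ 0) : Commute P (mulOp hm (resolventFun z hz)) := by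
  refine ContinuousLinearMap.ext fun u => ?_
  obtain ⟨hRu, hHRu⟩ := hH.exists_mem_domain_mulOp_resolventFun hm hz u
  obtain ⟨hPRu, hHPRu⟩ := hPH _ hRu
  rw [hHRu, map_add, map_smul] at hHPRu
  exact hH.eq_mulOp_resolventFun hm hz hPRu hHPRu

theorem commute_mulOp_cutoffFun (hH : IsMulOperator H m) (hm : Measurable m)
    {P : Lp ℂ 2 μ →L[ℂ] Lp ℂ 2 μ} (hPH : H.CommutesWith P) (lam : ℝ) : Commute P (mulOp hm (cutoffFun lam)) := by
  let S : Subalgebra ℂ (ℝ →ᵇ ℂ) := (Subalgebra.centralizer ℂ {P}).comap (mulOp hm)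
  have hS : IsClosed (S : Set (ℝ →ᵇ ℂ)) :=
    (Set.isClosed_centralizer {P}).preimage (continuous_mulOp hm)
  have hres : ∀ z (hz : z.im ≠ 0), resolventFun z hz ∈ S := fun z hz =>
    (Subalgebra.mem_centralizer_iff ℂ).mpr fun _ hQ =>
      (Set.mem_singleton_iff.mp hQ ▸ hH.commute_mulOp_resolventFun hm hPH hz).eq
  have hplus : (lam + I).im ≠ 0 := by simp
  have hminus : (lam - I).im ≠ 0 := by simp
  have hre : (2⁻¹ : ℂ) • (resolventFun _ hplus + resolventFun _ hminus) ∈ S.restrictScalars ℝ :=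
    S.smul_mem (S.add_mem (hres _ hplus) (hres _ hminus)) _
  have hcut : cutoffFun lam ∈ S.restrictScalars ℝ :=
    Subalgebra.comp_mem_of_isClosed hS hre
      (fun t => by simp [resolventFun_apply, ofReal_resolventRe, Algebra.smul_def])
      (resolventRe_mem_Icc lam) (continuous_id.max continuous_const).continuousOn (fun _ => rfl)
  exact (Subalgebra.mem_centralizer_iff ℂ).mp hcut P rfl

theorem ae_vanishing_of_mem_reducing (hH : IsMulOperator H m) (hm : Measurable m)
    {W : Submodule ℂ (Lp ℂ 2 μ)} {P : Lp ℂ 2 μ →L[ℂ] Lp ℂ 2 μ}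
    (hP : IsOrthogonalProjectionOnto (W : Set (Lp ℂ 2 μ)) P) (hPH : H.CommutesWith P)
    {lam : ℝ} (hform : ∀ u : Lp ℂ 2 μ, ∀ hu : u ∈ H.domain, u ∈ W →
      (inner ℂ (H ⟨u, hu⟩) u).re ≤ lam * ‖u‖ ^ 2)
    {w : Lp ℂ 2 μ} (hw : w ∈ W) : ∀ᵐ x ∂μ, lam < m x → w x = 0 := by
  have hz : (lam + I).im ≠ 0 := by simp
  set R := mulOp hm (resolventFun (lam + I) hz)
  set C := mulOp hm (cutoffFun lam)
  obtain ⟨hv, -⟩ := hH.exists_mem_domain_mulOp_resolventFun hm hz (C w)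
  have hvW : R (C w) ∈ W := hP.map_mem_of_commute (hH.commute_mulOp_resolventFun hm hPH hz)
    (hP.map_mem_of_commute (hH.commute_mulOp_cutoffFun hm hPH lam) hw)
  have hvan : ∀ᵐ x ∂μ, m x ≤ lam → R (C w) x = 0 := by
    filter_upwards [coeFn_mulOp hm (resolventFun (lam + I) hz) (C w),
      coeFn_mulOp hm (cutoffFun lam) w] with x hR hC hle
    rw [hR, hC, cutoffFun_eq_zero_iff.mpr hle, zero_mul, mul_zero]
  filter_upwards [hH.ae_eq_zero_of_re_inner_le hv (hform _ hv hvW) hvan,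
    coeFn_mulOp hm (resolventFun (lam + I) hz) (C w), coeFn_mulOp hm (cutoffFun lam) w]
    with x h0 hR hC hlt
  rw [hR, hC] at h0
  exact (mul_eq_zero.mp ((mul_eq_zero.mp h0).resolve_left
    (inv_ne_zero (ofReal_sub_ne_zero_of_im_ne_zero hz _)))).resolve_left
    (mt cutoffFun_eq_zero_iff.mp hlt.not_ge)

end IsMulOperator

end MultiplicationOperator

theorem stmt_16_general {Ω : Type*} [MeasurableSpace Ω] (μ : Measure Ω)
    (m : Ω → ℝ) (hm : Measurable m)
    (H : Lp ℂ 2 μ →ₗ.[ℂ] Lp ℂ 2 μ)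
    (hgraph : ∀ u v : Lp ℂ 2 μ,
      (u, v) ∈ H.graph ↔ (v : Ω → ℂ) =ᵐ[μ] fun x => (m x : ℂ) * u x)
    (lam : ℝ) :
    -- (a) `V_λ` is a closed subspace …
    (∃ V : Submodule ℂ (Lp ℂ 2 μ),
      (V : Set (Lp ℂ 2 μ)) = {u : Lp ℂ 2 μ | ∀ᵐ x ∂μ, lam < m x → u x = 0} ∧
      IsClosed (V : Set (Lp ℂ 2 μ))) ∧
    -- … whose orthogonal projection maps `D(H)` into `D(H)` and commutes with `H` …
    (∀ P : Lp ℂ 2 μ →L[ℂ] Lp ℂ 2 μ,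
      IsOrthogonalProjectionOnto {u : Lp ℂ 2 μ | ∀ᵐ x ∂μ, lam < m x → u x = 0} P →
      ∀ u : Lp ℂ 2 μ, ∀ hu : u ∈ H.domain,
        ∃ hPu : P u ∈ H.domain, H ⟨P u, hPu⟩ = P (H ⟨u, hu⟩)) ∧
    -- … and on which the quadratic form of `H` is bounded by `λ`:
    (∀ u : Lp ℂ 2 μ, ∀ hu : u ∈ H.domain,
      (∀ᵐ x ∂μ, lam < m x → u x = 0) →
      (@inner ℂ _ _ (H ⟨u, hu⟩) u).re ≤ lam * ‖u‖^2) ∧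
    -- (b) maximality:
    (∀ W : Submodule ℂ (Lp ℂ 2 μ), IsClosed (W : Set (Lp ℂ 2 μ)) →
      ∀ P : Lp ℂ 2 μ →L[ℂ] Lp ℂ 2 μ,
        IsOrthogonalProjectionOnto (W : Set (Lp ℂ 2 μ)) P →
        (∀ u : Lp ℂ 2 μ, ∀ hu : u ∈ H.domain,
          ∃ hPu : P u ∈ H.domain, H ⟨P u, hPu⟩ = P (H ⟨u, hu⟩)) →
        (∀ u : Lp ℂ 2 μ, ∀ hu : u ∈ H.domain, u ∈ W →
          (@inner ℂ _ _ (H ⟨u, hu⟩) u).re ≤ lam * ‖u‖^2) →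
        (W : Set (Lp ℂ 2 μ)) ⊆ {u : Lp ℂ 2 μ | ∀ᵐ x ∂μ, lam < m x → u x = 0}) := by
  have hH : IsMulOperator H m := hgraph
  have hs : MeasurableSet {x | lam < m x} := measurableSet_lt measurable_const hm
  have hV : (Lp.vanishingOn ℂ ℂ 2 μ {x | lam < m x} : Set (Lp ℂ 2 μ)) =
      {u | ∀ᵐ x ∂μ, lam < m x → u x = 0} :=
    Set.ext fun _ => Lp.mem_vanishingOn hs
  refine ⟨⟨_, hV, hV ▸ Lp.isClosed_vanishingOn _⟩, fun P hP => ?_,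
    fun u hu => hH.re_inner_le_of_ae_vanishing hu,
    fun W _ P hP hPH hform w hw => hH.ae_vanishing_of_mem_reducing hm hP hPH hform hw⟩
  rw [← hV] at hP
  exact hH.projection_vanishingOn_commutes hs hP

/-- Let `(Ω, μ)` be σ-finite, `m : Ω → ℝ` measurable, and `H` the maximal
multiplication operator `Hu = mu` on `L²(μ)` (described through its graph).  For `λ ∈ ℝ` let
`V_λ = {u ∈ L²(μ) : u = 0` a.e. on `{m > λ}}`.  Then (a) `V_λ` is a closed subspace; its
orthogonal projection `P` maps `D(H)` into `D(H)`, commutes with `H` on `D(H)`, and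
`(Hu, u) ≤ λ (u, u)` for `u ∈ V_λ ∩ D(H)`; and (b) `V_λ` is the largest closed subspace with
these properties: any closed subspace `W` whose orthogonal projection has these properties is
contained in `V_λ`.  (Hence `V_λ = E(λ)L²(μ)` for the spectral family `E` of `H`.) -/
theorem stmt_16 {Ω : Type*} [MeasurableSpace Ω] (μ : Measure Ω) [SigmaFinite μ]
    (m : Ω → ℝ) (hm : Measurable m)
    (H : Lp ℂ 2 μ →ₗ.[ℂ] Lp ℂ 2 μ)
    (hgraph : ∀ u v : Lp ℂ 2 μ,
      (u, v) ∈ H.graph ↔ (v : Ω → ℂ) =ᵐ[μ] fun x => (m x : ℂ) * u x)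
    (lam : ℝ) :
    -- (a) `V_λ` is a closed subspace …
    (∃ V : Submodule ℂ (Lp ℂ 2 μ),
      (V : Set (Lp ℂ 2 μ)) = {u : Lp ℂ 2 μ | ∀ᵐ x ∂μ, lam < m x → u x = 0} ∧
      IsClosed (V : Set (Lp ℂ 2 μ))) ∧
    -- … whose orthogonal projection maps `D(H)` into `D(H)` and commutes with `H` …
    (∀ P : Lp ℂ 2 μ →L[ℂ] Lp ℂ 2 μ,
      IsOrthogonalProjectionOnto {u : Lp ℂ 2 μ | ∀ᵐ x ∂μ, lam < m x → u x = 0} P →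
      ∀ u : Lp ℂ 2 μ, ∀ hu : u ∈ H.domain,
        ∃ hPu : P u ∈ H.domain, H ⟨P u, hPu⟩ = P (H ⟨u, hu⟩)) ∧
    -- … and on which the quadratic form of `H` is bounded by `λ`:
    (∀ u : Lp ℂ 2 μ, ∀ hu : u ∈ H.domain,
      (∀ᵐ x ∂μ, lam < m x → u x = 0) →
      (@inner ℂ _ _ (H ⟨u, hu⟩) u).re ≤ lam * ‖u‖^2) ∧
    -- (b) maximality:
    (∀ W : Submodule ℂ (Lp ℂ 2 μ), IsClosed (W : Set (Lp ℂ 2 μ)) →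
      ∀ P : Lp ℂ 2 μ →L[ℂ] Lp ℂ 2 μ,
        IsOrthogonalProjectionOnto (W : Set (Lp ℂ 2 μ)) P →
        (∀ u : Lp ℂ 2 μ, ∀ hu : u ∈ H.domain,
          ∃ hPu : P u ∈ H.domain, H ⟨P u, hPu⟩ = P (H ⟨u, hu⟩)) →
        (∀ u : Lp ℂ 2 μ, ∀ hu : u ∈ H.domain, u ∈ W →
          (@inner ℂ _ _ (H ⟨u, hu⟩) u).re ≤ lam * ‖u‖^2) →
        (W : Set (Lp ℂ 2 μ)) ⊆ {u : Lp ℂ 2 μ | ∀ᵐ x ∂μ, lam < m x → u x = 0}) :=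
  stmt_16_general μ m hm H hgraph lam
end
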